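/- arXiv:2203.13650 — 2 statements merged into one kernel-verified Lean document; each statement's English description precedes it below -/
import Mathlib

section
/- If A < K and u ≠ 0, then at the steady state (K, u√K) of the Allee plasticity system, the Jacobian has negative trace and positive determinant, hence both eigenvalues have negative real part and the steady state is locally asymptotically stable. -/
/-!
The characteristic polynomial of a real 2×2 matrix is `λ² - (tr J) λ + det J`. A complex root
with nonzero imaginary part has real part `tr J / 2 < 0`; a real root `x ≥ 0` is impossible,
since then `x² - (tr J) x + det J ≥ det J > 0`.
-/

open Matrix

theorem Matrix.det_map_ofReal_sub_smul_one_fin_two (J : Matrix (Fin 2) (Fin 2) ℝ) (lam : ℂ) :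
    (J.map Complex.ofReal - lam • (1 : Matrix (Fin 2) (Fin 2) ℂ)).det
      = lam ^ 2 - (J.trace : ℂ) * lam + (J.det : ℂ) := by
  simp only [det_fin_two, trace_fin_two, sub_apply, map_apply, smul_apply, one_apply_eq,
    one_apply_ne Fin.zero_ne_one, one_apply_ne Fin.zero_ne_one.symm, smul_eq_mul, mul_one,
    mul_zero, sub_zero, Complex.ofReal_add, Complex.ofReal_sub, Complex.ofReal_mul]
  ring

theorem Complex.re_neg_of_sq_sub_mul_add_eq_zero {t d : ℝ} (ht : t < 0) (hd : 0 < d) {lam : ℂ}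
    (h : lam ^ 2 - (t : ℂ) * lam + (d : ℂ) = 0) : lam.re < 0 := by
  have hre : lam.re * lam.re - lam.im * lam.im - t * lam.re + d = 0 := by
    simpa [pow_two] using congrArg Complex.re h
  have him : lam.im * (2 * lam.re - t) = 0 := by
    have := congrArg Complex.im h
    simp only [pow_two, sub_im, add_im, mul_im, ofReal_re, ofReal_im, zero_im] at this
    linear_combination this
  rcases mul_eq_zero.mp him with him | hre_eq
  · rw [him] at hre
    by_contra! hx
    nlinarith [mul_nonneg hx hx, mul_nonneg (neg_nonneg.mpr ht.le) hx]
  · linarith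

theorem Matrix.re_neg_of_det_map_ofReal_sub_smul_one_eq_zero {J : Matrix (Fin 2) (Fin 2) ℝ}
    (htr : J.trace < 0) (hdet : 0 < J.det) {lam : ℂ}
    (hlam : (J.map Complex.ofReal - lam • (1 : Matrix (Fin 2) (Fin 2) ℂ)).det = 0) :
    lam.re < 0 :=
  Complex.re_neg_of_sq_sub_mul_add_eq_zero htr hdet
    (J.det_map_ofReal_sub_smul_one_fin_two lam ▸ hlam)

theorem stmt4_general (A K u : ℝ) (hK : 0 < K) (hAK : A < K) (hu : u ≠ 0)
    (t d : ℝ) (ht : t = -(1 + u ^ 2 * (1 - A / K))) (hd : d = 2 * u ^ 2 * (1 - A / K)) :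
    t < 0 ∧ 0 < d ∧
    ∀ J : Matrix (Fin 2) (Fin 2) ℝ, J.trace = t → J.det = d →
      ∀ lam : ℂ, ((J.map (Complex.ofReal)) - lam • (1 : Matrix (Fin 2) (Fin 2) ℂ)).det = 0 →
        lam.re < 0 := by
  have hP : 0 < 1 - A / K := sub_pos.mpr ((div_lt_one hK).mpr hAK)
  have hu2 : 0 < u ^ 2 := by positivity
  have htneg : t < 0 := by rw [ht]; nlinarith
  have hdpos : 0 < d := by rw [hd]; positivity
  refine ⟨htneg, hdpos, fun J htr hdet lam hlam => ?_⟩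
  exact re_neg_of_det_map_ofReal_sub_smul_one_eq_zero (htr ▸ htneg) (hdet ▸ hdpos) hlam

theorem stmt4 (A K u : ℝ) (hA : 0 < A) (hK : 0 < K) (hAK : A < K) (hu : u ≠ 0)
    (t d : ℝ) (ht : t = -(1 + u ^ 2 * (1 - A / K))) (hd : d = 2 * u ^ 2 * (1 - A / K)) :
    t < 0 ∧ 0 < d ∧
    ∀ J : Matrix (Fin 2) (Fin 2) ℝ, J.trace = t → J.det = d →
      ∀ lam : ℂ, ((J.map (Complex.ofReal)) - lam • (1 : Matrix (Fin 2) (Fin 2) ℂ)).det = 0 →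
        lam.re < 0 :=
  stmt4_general A K u hK hAK hu t d ht hd
end

section
/- If γ > 0, then the matrix [[α₁, 0, 0],[β, γ, -1],[-β, -γ, -1]] has a real eigenvalue λ = (γ - 1 + √((γ+1)² + 4γ))/2 satisfying λ ≥ γ > 0; hence the equilibrium B₁ is linearly unstable. -/
/-!
Expanding along the first row, `det (M - λ) = (α₁ - λ) · (λ² - (γ - 1) λ - 2γ)`, and the given `λ` is
the larger root of the quadratic factor, whose discriminant is `(γ - 1)² + 8γ = (γ + 1)² + 4γ`.
Since that discriminant is at least `(γ + 1)²`, this root is at least `(γ - 1 + γ + 1) / 2 = γ`.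
-/

open Real Matrix

theorem Matrix.fin_three_sub_smul_one {R : Type*} [CommRing R] (a b c d e f g h i t : R) :
    !![a, b, c; d, e, f; g, h, i] - t • (1 : Matrix (Fin 3) (Fin 3) R) =
      !![a - t, b, c; d, e - t, f; g, h, i - t] := by
  ext i j
  fin_cases i <;> fin_cases j <;> simp

theorem Matrix.det_fin_three_of_first_row_zero {R : Type*} [CommRing R] (a d e f g h i : R) :
    !![a, 0, 0; d, e, f; g, h, i].det = a * (e * i - f * h) := by
  rw [Matrix.det_fin_three]
  simp only [Matrix.of_apply, Matrix.cons_val', Matrix.cons_val_zero, Matrix.cons_val_one,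
    Matrix.cons_val_two, Matrix.empty_val', Matrix.cons_val_fin_one, Matrix.head_cons,
    Matrix.tail_cons, Matrix.head_fin_const]
  ring

theorem larger_root_isRoot {γ lam : ℝ} (hγ : 0 ≤ γ)
    (hlam : lam = (γ - 1 + √((γ + 1) ^ 2 + 4 * γ)) / 2) :
    lam ^ 2 - (γ - 1) * lam - 2 * γ = 0 := by
  have hsq : √((γ + 1) ^ 2 + 4 * γ) ^ 2 = (γ + 1) ^ 2 + 4 * γ := Real.sq_sqrt (by positivity)
  subst hlam
  linear_combination hsq / 4

theorem le_larger_root {γ lam : ℝ} (hγ : 0 ≤ γ)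
    (hlam : lam = (γ - 1 + √((γ + 1) ^ 2 + 4 * γ)) / 2) : γ ≤ lam := by
  have hsqrt : γ + 1 ≤ √((γ + 1) ^ 2 + 4 * γ) := Real.le_sqrt_of_sq_le (by linarith)
  rw [hlam]
  linarith

theorem stmt11 (α₁ β γ : ℝ) (hγ : 0 < γ)
    (M : Matrix (Fin 3) (Fin 3) ℝ)
    (hM : M = !![α₁, 0, 0; β, γ, -1; -β, -γ, -1])
    (lam : ℝ) (hlam : lam = (γ - 1 + Real.sqrt ((γ + 1) ^ 2 + 4 * γ)) / 2) :
    (M - lam • (1 : Matrix (Fin 3) (Fin 3) ℝ)).det = 0 ∧ γ ≤ lam ∧ 0 < lam := by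
  have hroot := larger_root_isRoot hγ.le hlam
  have hle := le_larger_root hγ.le hlam
  refine ⟨?_, hle, hγ.trans_le hle⟩
  rw [hM, Matrix.fin_three_sub_smul_one, Matrix.det_fin_three_of_first_row_zero]
  linear_combination (α₁ - lam) * hroot
end
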